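/- arXiv:1305.4746 — 2 statements merged into one kernel-verified Lean document; each statement's English description precedes it below -/
import Mathlib

section
/- Let X and Y be random variables taking values in finite sets, and let Z(X|Y) = 2 * Σ_y p_Y(y) * sqrt(p_{X|Y}(0|y) * p_{X|Y}(1|y)) be the Bhattacharyya parameter for a binary X. If (X₁,Y₁) and (X₂,Y₂) are two independent copies of (X,Y), then Z(X₁ ⊕ X₂ | Y₁,Y₂) ≥ sqrt(2·Z(X|Y)² − Z(X|Y)⁴). -/
/-!
Write `s y = p(0,y) + p(1,y)` (`marginal`) and `a y = 4 p(0,y) p(1,y)` (`bhattacharyyaSq`),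
so that `Z = ∑ √(a y)`, `∑ s = 1` and `0 ≤ a ≤ s²`. For the minus channel a direct expansion
gives `4 q(0,y₁y₂) q(1,y₁y₂) = a₁ s₂² + (s₁² - a₁) a₂`. Minkowski's inequality in the plane,
`√((∑ u)² + (∑ w)²) ≤ ∑ √(u² + w²)`, applied once over `y₂` and once over `y₁`, then gives
`Z⁻ ≥ ∑_{y₁} √(a₁ + (s₁² - a₁) Z²) ≥ √(Z² + (1 - Z²) Z²)`.
-/

open Finset

noncomputable def distOf {Ω α : Type*} [Fintype Ω] [DecidableEq α] (μ : Ω → ℝ) (f : Ω → α) : α → ℝ :=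
  fun x => ∑ ω, if f ω = x then μ ω else 0

noncomputable def ent {α : Type*} [Fintype α] (p : α → ℝ) : ℝ :=
  -∑ a, p a * Real.logb 2 (p a)

noncomputable def Hrv {Ω α : Type*} [Fintype Ω] [Fintype α] [DecidableEq α]
    (μ : Ω → ℝ) (f : Ω → α) : ℝ :=
  ent (distOf μ f)

noncomputable def MIrv {Ω α β : Type*} [Fintype Ω] [Fintype α] [Fintype β]
    [DecidableEq α] [DecidableEq β] (μ : Ω → ℝ) (f : Ω → α) (g : Ω → β) : ℝ :=
  Hrv μ f + Hrv μ g - Hrv μ (fun ω => (f ω, g ω))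

noncomputable def condH {Ω α β : Type*} [Fintype Ω] [Fintype α] [Fintype β]
    [DecidableEq α] [DecidableEq β] (μ : Ω → ℝ) (f : Ω → α) (g : Ω → β) : ℝ :=
  Hrv μ (fun ω => (f ω, g ω)) - Hrv μ g

noncomputable def cMI {Ω α β γ : Type*} [Fintype Ω] [Fintype α] [Fintype β] [Fintype γ]
    [DecidableEq α] [DecidableEq β] [DecidableEq γ]
    (μ : Ω → ℝ) (f : Ω → α) (g : Ω → β) (h : Ω → γ) : ℝ :=
  Hrv μ (fun ω => (f ω, h ω)) + Hrv μ (fun ω => (g ω, h ω))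
    - Hrv μ (fun ω => (f ω, g ω, h ω)) - Hrv μ h

def IsPMF {Ω : Type*} [Fintype Ω] (μ : Ω → ℝ) : Prop := (∀ ω, 0 ≤ μ ω) ∧ ∑ ω, μ ω = 1

noncomputable def TV {α : Type*} [Fintype α] (p q : α → ℝ) : ℝ := (1/2) * ∑ a, |p a - q a|

noncomputable def Zbh {Y : Type*} [Fintype Y] (p : ZMod 2 × Y → ℝ) : ℝ :=
  2 * ∑ y, (∑ x, p (x, y)) *
    Real.sqrt ((p (0, y) / ∑ x, p (x, y)) * (p (1, y) / ∑ x, p (x, y)))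

lemma sqrt_sq_sum_add_sq_sum_le {ι : Type*} (s : Finset ι) (f g : ι → ℝ) :
    √((∑ i ∈ s, f i) ^ 2 + (∑ i ∈ s, g i) ^ 2) ≤ ∑ i ∈ s, √(f i ^ 2 + g i ^ 2) := by
  simpa [Complex.norm_eq_sqrt_sq_add_sq, Complex.re_sum, Complex.im_sum]
    using norm_sum_le s fun i => (⟨f i, g i⟩ : ℂ)

lemma sqrt_mul_sq_sum_add_mul_sq_sum_sqrt_le {ι : Type*} (s : Finset ι) {α β : ℝ}
    (hα : 0 ≤ α) (hβ : 0 ≤ β) (u v : ι → ℝ) (hv : ∀ i ∈ s, 0 ≤ v i) :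
    √(α * (∑ i ∈ s, u i) ^ 2 + β * (∑ i ∈ s, √(v i)) ^ 2)
      ≤ ∑ i ∈ s, √(α * u i ^ 2 + β * v i) := by
  convert sqrt_sq_sum_add_sq_sum_le s (fun i => √α * u i) (fun i => √β * √(v i)) using 2
  · rw [← mul_sum, ← mul_sum, mul_pow, mul_pow, Real.sq_sqrt hα, Real.sq_sqrt hβ]
  · rename_i i hi
    rw [mul_pow, mul_pow, Real.sq_sqrt hα, Real.sq_sqrt hβ, Real.sq_sqrt (hv i hi)]

lemma two_mul_add_mul_sqrt_div_mul_div {a b : ℝ} (ha : 0 ≤ a) (hb : 0 ≤ b) :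
    2 * ((a + b) * √(a / (a + b) * (b / (a + b)))) = √(4 * (a * b)) := by
  rcases (add_nonneg ha hb).eq_or_lt with h | h
  · obtain ⟨rfl, rfl⟩ : a = 0 ∧ b = 0 := ⟨by linarith, by linarith⟩
    simp
  · rw [div_mul_div_comm, Real.sqrt_div' _ (by positivity), ← pow_two, Real.sqrt_sq h.le,
      Real.sqrt_mul' _ (mul_nonneg ha hb), show (4 : ℝ) = 2 ^ 2 by norm_num,
      Real.sqrt_sq zero_le_two]
    field_simp

lemma sum_zmod_two {M : Type*} [AddCommMonoid M] (f : ZMod 2 → M) : ∑ x, f x = f 0 + f 1 :=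
  Fin.sum_univ_two f

section Bhattacharyya

variable {Y : Type*} (p : ZMod 2 × Y → ℝ)

def marginal (y : Y) : ℝ := ∑ x, p (x, y)

def bhattacharyyaSq (y : Y) : ℝ := 4 * (p (0, y) * p (1, y))

-- the joint law of `(X₁ + X₂, (Y₁, Y₂))` for independent copies `(X₁, Y₁)`, `(X₂, Y₂)` of `p`
def minusTransform : ZMod 2 × (Y × Y) → ℝ :=
  fun z => ∑ x : ZMod 2, p (x, z.2.1) * p (z.1 + x, z.2.2)

lemma bhattacharyyaSq_nonneg (hp : ∀ z, 0 ≤ p z) (y : Y) : 0 ≤ bhattacharyyaSq p y :=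
  mul_nonneg zero_le_four (mul_nonneg (hp _) (hp _))

lemma bhattacharyyaSq_le_marginal_sq (y : Y) : bhattacharyyaSq p y ≤ marginal p y ^ 2 := by
  rw [bhattacharyyaSq, marginal, sum_zmod_two]
  nlinarith [sq_nonneg (p (0, y) - p (1, y))]

lemma minusTransform_nonneg (hp : ∀ z, 0 ≤ p z) (z : ZMod 2 × (Y × Y)) :
    0 ≤ minusTransform p z :=
  sum_nonneg fun _ _ => mul_nonneg (hp _) (hp _)

lemma bhattacharyyaSq_minusTransform (y₁ y₂ : Y) :
    bhattacharyyaSq (minusTransform p) (y₁, y₂)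
      = bhattacharyyaSq p y₁ * marginal p y₂ ^ 2
        + (marginal p y₁ ^ 2 - bhattacharyyaSq p y₁) * bhattacharyyaSq p y₂ := by
  simp only [bhattacharyyaSq, minusTransform, marginal, sum_zmod_two, zero_add, add_zero]
  rw [show ((1 : ZMod 2) + 1) = 0 from rfl]
  ring

variable [Fintype Y]

lemma sum_marginal : ∑ y, marginal p y = ∑ z, p z := by
  rw [Fintype.sum_prod_type, sum_comm]
  rfl

lemma Zbh_eq_sum_sqrt_bhattacharyyaSq (hp : ∀ z, 0 ≤ p z) :
    Zbh p = ∑ y, √(bhattacharyyaSq p y) := by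
  rw [Zbh, mul_sum]
  refine sum_congr rfl fun y _ => ?_
  rw [sum_zmod_two]
  exact two_mul_add_mul_sqrt_div_mul_div (hp _) (hp _)

lemma Zbh_le_sum_marginal (hp : ∀ z, 0 ≤ p z) : Zbh p ≤ ∑ y, marginal p y := by
  rw [Zbh_eq_sum_sqrt_bhattacharyyaSq p hp]
  exact sum_le_sum fun y _ => Real.sqrt_le_iff.mpr
    ⟨sum_nonneg fun _ _ => hp _, bhattacharyyaSq_le_marginal_sq p y⟩

lemma Zbh_minusTransform (hp : ∀ z, 0 ≤ p z) :
    Zbh (minusTransform p) = ∑ y₁, ∑ y₂, √(bhattacharyyaSq p y₁ * marginal p y₂ ^ 2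
        + (marginal p y₁ ^ 2 - bhattacharyyaSq p y₁) * bhattacharyyaSq p y₂) := by
  rw [Zbh_eq_sum_sqrt_bhattacharyyaSq _ (minusTransform_nonneg p hp), Fintype.sum_prod_type]
  simp only [bhattacharyyaSq_minusTransform]

variable {p}

lemma sqrt_add_mul_Zbh_sq_le (hp : ∀ z, 0 ≤ p z) (hp1 : ∑ z, p z = 1) (y₁ : Y) :
    √(bhattacharyyaSq p y₁ + (marginal p y₁ ^ 2 - bhattacharyyaSq p y₁) * Zbh p ^ 2)
      ≤ ∑ y₂, √(bhattacharyyaSq p y₁ * marginal p y₂ ^ 2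
        + (marginal p y₁ ^ 2 - bhattacharyyaSq p y₁) * bhattacharyyaSq p y₂) := by
  have key := sqrt_mul_sq_sum_add_mul_sq_sum_sqrt_le univ (bhattacharyyaSq_nonneg p hp y₁)
    (sub_nonneg.mpr (bhattacharyyaSq_le_marginal_sq p y₁)) (marginal p) (bhattacharyyaSq p)
    fun y _ => bhattacharyyaSq_nonneg p hp y
  rwa [sum_marginal, hp1, ← Zbh_eq_sum_sqrt_bhattacharyyaSq p hp, one_pow, mul_one] at key

lemma sqrt_two_mul_Zbh_sq_sub_Zbh_pow_four_le (hp : ∀ z, 0 ≤ p z) (hp1 : ∑ z, p z = 1) :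
    √(2 * Zbh p ^ 2 - Zbh p ^ 4)
      ≤ ∑ y, √(bhattacharyyaSq p y + (marginal p y ^ 2 - bhattacharyyaSq p y) * Zbh p ^ 2) := by
  have hZ : 0 ≤ Zbh p := by
    rw [Zbh_eq_sum_sqrt_bhattacharyyaSq p hp]
    exact sum_nonneg fun _ _ => Real.sqrt_nonneg _
  have hZ1 : Zbh p ≤ 1 := (Zbh_le_sum_marginal p hp).trans_eq (by rw [sum_marginal, hp1])
  have key := sqrt_mul_sq_sum_add_mul_sq_sum_sqrt_le univ (sq_nonneg (Zbh p))
    (sub_nonneg.mpr (pow_le_one₀ hZ hZ1) : 0 ≤ 1 - Zbh p ^ 2) (marginal p) (bhattacharyyaSq p)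
    fun y _ => bhattacharyyaSq_nonneg p hp y
  rw [sum_marginal, hp1, ← Zbh_eq_sum_sqrt_bhattacharyyaSq p hp] at key
  convert key using 3 <;> ring

end Bhattacharyya

/-- Bhattacharyya parameter bound for the `minus` polar transform:
if `(X₁,Y₁)` and `(X₂,Y₂)` are independent copies of `(X,Y)` then
`Z(X₁ ⊕ X₂ | Y₁ Y₂) ≥ √(2 Z(X|Y)² − Z(X|Y)⁴)`. -/
theorem bhattacharyya_minus_transform {Y : Type*} [Fintype Y]
    (p : ZMod 2 × Y → ℝ) (hp0 : ∀ z, 0 ≤ p z) (hp1 : ∑ z, p z = 1) :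
    Real.sqrt (2 * Zbh p ^ 2 - Zbh p ^ 4)
      ≤ Zbh (fun z : ZMod 2 × (Y × Y) =>
          ∑ x : ZMod 2, p (x, z.2.1) * p (z.1 + x, z.2.2)) := by
  change _ ≤ Zbh (minusTransform p)
  rw [Zbh_minusTransform p hp0]
  exact (sqrt_two_mul_Zbh_sq_sub_Zbh_pow_four_le hp0 hp1).trans
    (sum_le_sum fun y₁ _ => sqrt_add_mul_Zbh_sq_le hp0 hp1 y₁)
end

section
/- Let K, K̃, F, F′, Z be discrete random variables and K̃₀ a uniformly distributed random bit-string of the same length as F′, with K̃₀ independent of (K, K̃, F, F′, Z). If I(K, K̃; F, Z) ≤ ε₁ and (length of K̃₀) − H(K̃₀) ≤ ε₂, then I(K, K̃; F, F′ ⊕ K̃₀, Z) ≤ ε₁ + ε₂, where ⊕ is bitwise XOR. -/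
open Finset

set_option synthInstance.maxSize 1000

/-! Since `K̃₀` is uniform on the group of bit-strings and independent of
`V = (K, K̃, F, F′, Z)`, the pair `(F′ ⊕ K̃₀, g V)` has law `uniform ⊗ law (g V)` for
every `g`. Appending the padded string therefore adds the same amount to `H(F, Z)` and to
`H(K, K̃, F, Z)`, so `I(K, K̃; F, F′ ⊕ K̃₀, Z) = I(K, K̃; F, Z) ≤ ε₁`. -/

section Entropy

variable {Ω : Type*} [Fintype Ω]

lemma distOf_comp {α β : Type*} [Fintype α] [DecidableEq α] [DecidableEq β]
    (μ : Ω → ℝ) (f : Ω → α) (g : α → β) (b : β) :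
    distOf μ (fun ω => g (f ω)) b = ∑ a, if g a = b then distOf μ f a else 0 := by
  unfold distOf
  simp only [Finset.ite_sum_zero]
  rw [Finset.sum_comm]
  refine Finset.sum_congr rfl fun ω _ => ?_
  simp only [← ite_and, and_comm (a := g _ = b)]
  simp only [ite_and, Finset.sum_ite_eq, Finset.mem_univ, if_true]

lemma sum_distOf {α : Type*} [Fintype α] [DecidableEq α] (μ : Ω → ℝ) (f : Ω → α) :
    ∑ a, distOf μ f a = ∑ ω, μ ω := by
  unfold distOf
  rw [Finset.sum_comm]
  simp

lemma Hrv_comp_equiv {α β : Type*} [Fintype α] [Fintype β] [DecidableEq α] [DecidableEq β]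
    (μ : Ω → ℝ) (f : Ω → α) (e : α ≃ β) :
    Hrv μ (fun ω => e (f ω)) = Hrv μ f := by
  have hdist : ∀ b, distOf μ (fun ω => e (f ω)) b = distOf μ f (e.symm b) := fun b =>
    Finset.sum_congr rfl fun ω _ => if_congr e.eq_symm_apply.symm rfl rfl
  unfold Hrv ent
  simp only [hdist]
  rw [Equiv.sum_comp e.symm (fun a => distOf μ f a * Real.logb 2 (distOf μ f a))]

lemma MIrv_comp_equiv_right {α β γ : Type*} [Fintype α] [Fintype β] [Fintype γ]
    [DecidableEq α] [DecidableEq β] [DecidableEq γ]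
    (μ : Ω → ℝ) (f : Ω → α) (g : Ω → β) (e : β ≃ γ) :
    MIrv μ f (fun ω => e (g ω)) = MIrv μ f g := by
  unfold MIrv
  rw [Hrv_comp_equiv, ← Hrv_comp_equiv μ (fun ω => (f ω, g ω)) ((Equiv.refl α).prodCongr e)]
  rfl

lemma mul_logb_div (x : ℝ) {y : ℝ} (hy : y ≠ 0) :
    x * Real.logb 2 (x / y) = x * Real.logb 2 x - x * Real.logb 2 y := by
  rcases eq_or_ne x 0 with rfl | hx
  · simp
  · rw [Real.logb_div hx hy]
    ring

lemma ent_of_eq_div_card {α β : Type*} [Fintype α] [Fintype β] [Nonempty β]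
    (q : α → ℝ) (p : β × α → ℝ) (hp : ∀ b a, p (b, a) = q a / Fintype.card β) :
    ent p = Real.logb 2 (Fintype.card β) * ∑ a, q a + ent q := by
  have hcard : (Fintype.card β : ℝ) ≠ 0 := by positivity
  have hterm : ∀ a,
      (Fintype.card β : ℝ) * (q a / Fintype.card β * Real.logb 2 (q a / Fintype.card β)) =
        q a * Real.logb 2 (q a) - q a * Real.logb 2 (Fintype.card β) := fun a => by
    rw [← mul_logb_div _ hcard]
    field_simp
  unfold ent
  simp only [Fintype.sum_prod_type, hp, Finset.sum_const, Finset.card_univ, nsmul_eq_mul]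
  rw [Finset.mul_sum]
  simp only [hterm, Finset.sum_sub_distrib, ← Finset.sum_mul]
  ring

end Entropy

def prodLeftComm (α β γ : Type*) : α × β × γ ≃ β × α × γ where
  toFun p := (p.2.1, p.1, p.2.2)
  invFun p := (p.2.1, p.1, p.2.2)
  left_inv _ := rfl
  right_inv _ := rfl

section OneTimePad

variable {Ω G ν : Type*} [Fintype Ω] [AddGroup G] [Fintype G] [DecidableEq G]
  [Fintype ν] [DecidableEq ν] (μ : Ω → ℝ) (U : Ω → G) (V : Ω → ν)

lemma distOf_add_uniform_of_indep {α : Type*} [DecidableEq α]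
    (hunif : ∀ x, distOf μ U x = (Fintype.card G : ℝ)⁻¹)
    (hind : ∀ x y, distOf μ (fun ω => (U ω, V ω)) (x, y) = distOf μ U x * distOf μ V y)
    (s : ν → G) (g : ν → α) (w : G) (a : α) :
    distOf μ (fun ω => (s (V ω) + U ω, g (V ω))) (w, a)
      = distOf μ (fun ω => g (V ω)) a / Fintype.card G := by
  rw [distOf_comp μ (fun ω => (U ω, V ω)) (fun p => (s p.2 + p.1, g p.2)),
    distOf_comp μ V g, Fintype.sum_prod_type, Finset.sum_comm, div_eq_inv_mul, Finset.mul_sum]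
  refine Finset.sum_congr rfl fun v _ => ?_
  -- the pad value `x` is forced to be `-s v + w`
  simp only [hind, hunif, Prod.mk.injEq, ← eq_neg_add_iff_add_eq, ite_and, Finset.sum_ite_eq',
    Finset.mem_univ, if_true, mul_ite, mul_zero]

lemma Hrv_add_uniform_of_indep {α : Type*} [Fintype α] [DecidableEq α]
    (hunif : ∀ x, distOf μ U x = (Fintype.card G : ℝ)⁻¹)
    (hind : ∀ x y, distOf μ (fun ω => (U ω, V ω)) (x, y) = distOf μ U x * distOf μ V y)
    (s : ν → G) (g : ν → α) :
    Hrv μ (fun ω => (s (V ω) + U ω, g (V ω)))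
      = Real.logb 2 (Fintype.card G) * ∑ ω, μ ω + Hrv μ (fun ω => g (V ω)) := by
  unfold Hrv
  rw [ent_of_eq_div_card _ _ (distOf_add_uniform_of_indep μ U V hunif hind s g), sum_distOf]

theorem MIrv_add_uniform_of_indep {α β : Type*} [Fintype α] [DecidableEq α]
    [Fintype β] [DecidableEq β]
    (hunif : ∀ x, distOf μ U x = (Fintype.card G : ℝ)⁻¹)
    (hind : ∀ x y, distOf μ (fun ω => (U ω, V ω)) (x, y) = distOf μ U x * distOf μ V y)
    (s : ν → G) (f : ν → α) (g : ν → β) :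
    MIrv μ (fun ω => f (V ω)) (fun ω => (s (V ω) + U ω, g (V ω)))
      = MIrv μ (fun ω => f (V ω)) (fun ω => g (V ω)) := by
  have hjoint : Hrv μ (fun ω => (f (V ω), s (V ω) + U ω, g (V ω)))
      = Hrv μ (fun ω => (s (V ω) + U ω, f (V ω), g (V ω))) :=
    (Hrv_comp_equiv μ _ (prodLeftComm α G β)).symm
  unfold MIrv
  rw [hjoint, Hrv_add_uniform_of_indep μ U V hunif hind s g,
    Hrv_add_uniform_of_indep μ U V hunif hind s (fun v => (f v, g v))]
  ring

end OneTimePad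

theorem one_time_pad_leakage_bound_general {Ω κ κ' φ ζ : Type*} [Fintype Ω]
    [Fintype κ] [Fintype κ'] [Fintype φ] [Fintype ζ]
    [DecidableEq κ] [DecidableEq κ'] [DecidableEq φ] [DecidableEq ζ]
    (d : ℕ) (μ : Ω → ℝ)
    (K : Ω → κ) (K' : Ω → κ') (F : Ω → φ) (F' : Ω → Fin d → ZMod 2) (Z : Ω → ζ)
    (K0 : Ω → Fin d → ZMod 2)
    (hunif : ∀ x, distOf μ K0 x = 1 / 2 ^ d)
    (hind : ∀ x y, distOf μ (fun ω => (K0 ω, (K ω, K' ω, F ω, F' ω, Z ω))) (x, y)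
      = distOf μ K0 x * distOf μ (fun ω => (K ω, K' ω, F ω, F' ω, Z ω)) y)
    (ε₁ ε₂ : ℝ) (hε₂ : 0 ≤ ε₂)
    (h1 : MIrv μ (fun ω => (K ω, K' ω)) (fun ω => (F ω, Z ω)) ≤ ε₁) :
    MIrv μ (fun ω => (K ω, K' ω))
           (fun ω => (F ω, (fun i => F' ω i + K0 ω i), Z ω)) ≤ ε₁ + ε₂ := by
  have hunif' : ∀ x, distOf μ K0 x = (Fintype.card (Fin d → ZMod 2) : ℝ)⁻¹ := by
    simpa [Fintype.card_fun] using hunif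
  calc MIrv μ (fun ω => (K ω, K' ω)) (fun ω => (F ω, (fun i => F' ω i + K0 ω i), Z ω))
      = MIrv μ (fun ω => (K ω, K' ω)) (fun ω => (F' ω + K0 ω, F ω, Z ω)) :=
        (MIrv_comp_equiv_right μ _ _ (prodLeftComm _ _ _)).symm
    _ = MIrv μ (fun ω => (K ω, K' ω)) (fun ω => (F ω, Z ω)) :=
        MIrv_add_uniform_of_indep μ K0 (fun ω => (K ω, K' ω, F ω, F' ω, Z ω)) hunif' hind
          (fun v => v.2.2.2.1) (fun v => (v.1, v.2.1)) (fun v => (v.2.2.1, v.2.2.2.2))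
    _ ≤ ε₁ + ε₂ := le_add_of_le_of_nonneg h1 hε₂

/-- one-time-pad step: if `K̃₀` is a uniform bit-string of length `d`,
independent of `(K, K̃, F, F′, Z)`, `I(K, K̃; F, Z) ≤ ε₁` and `d − H(K̃₀) ≤ ε₂`, then
`I(K, K̃; F, F′ ⊕ K̃₀, Z) ≤ ε₁ + ε₂`. -/
theorem one_time_pad_leakage_bound {Ω κ κ' φ ζ : Type*} [Fintype Ω]
    [Fintype κ] [Fintype κ'] [Fintype φ] [Fintype ζ]
    [DecidableEq κ] [DecidableEq κ'] [DecidableEq φ] [DecidableEq ζ]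
    (d : ℕ) (μ : Ω → ℝ) (hμ : IsPMF μ)
    (K : Ω → κ) (K' : Ω → κ') (F : Ω → φ) (F' : Ω → Fin d → ZMod 2) (Z : Ω → ζ)
    (K0 : Ω → Fin d → ZMod 2)
    (hunif : ∀ x, distOf μ K0 x = 1 / 2 ^ d)
    (hind : ∀ x y, distOf μ (fun ω => (K0 ω, (K ω, K' ω, F ω, F' ω, Z ω))) (x, y)
      = distOf μ K0 x * distOf μ (fun ω => (K ω, K' ω, F ω, F' ω, Z ω)) y)
    (ε₁ ε₂ : ℝ) (hε₁ : 0 ≤ ε₁) (hε₂ : 0 ≤ ε₂)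
    (h1 : MIrv μ (fun ω => (K ω, K' ω)) (fun ω => (F ω, Z ω)) ≤ ε₁)
    (h2 : (d : ℝ) - Hrv μ K0 ≤ ε₂) :
    MIrv μ (fun ω => (K ω, K' ω))
           (fun ω => (F ω, (fun i => F' ω i + K0 ω i), Z ω)) ≤ ε₁ + ε₂ :=
  one_time_pad_leakage_bound_general d μ K K' F F' Z K0 hunif hind ε₁ ε₂ hε₂ h1
end
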